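/- arXiv:1902.03001 — 5 statements merged into one kernel-verified Lean document; each statement's English description precedes it below -/
import Mathlib

section
/- Let V be a Poisson algebra over a field k of characteristic 0 and D a Poisson derivation of V. Then for all a, b, c ∈ V and all n, m, k ∈ ℤ the following identity holds in the Laurent polynomial ring V[t,t⁻¹]: B(a,n;[b,c],m+k) + B(a,n; m·b·D(c) − k·c·D(b), m+k−1) + B(b,m;[c,a],k+n) + B(b,m; k·c·D(a) − n·a·D(c), k+n−1) + B(c,k;[a,b],n+m) + B(c,k; n·a·D(b) − m·b·D(a), n+m−1) = 0. (This is the Jacobi identity [a·tⁿ,[b·tᵐ,c·tᵏ]] + [b·tᵐ,[c·tᵏ,a·tⁿ]] + [c·tᵏ,[a·tⁿ,b·tᵐ]] = 0 for the bracket of Corollary 3.5, after expanding the inner brackets.) -/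
open LaurentPolynomial

/-- The bracket `B(a,n;b,m) = [a,b]·t^{n+m} + (n·a·D(b) − m·b·D(a))·t^{n+m−1}`
on the Laurent polynomial ring `V[t,t⁻¹]` (Corollary 3.5 of the paper). -/
noncomputable def laurentBr {V : Type*} [CommRing V] (br : V → V → V) (D : V → V)
    (a : V) (n : ℤ) (b : V) (m : ℤ) : LaurentPolynomial V :=
  LaurentPolynomial.C (br a b) * T (n + m)
    + LaurentPolynomial.C (n • (a * D b) - m • (b * D a)) * T (n + m - 1)

/-- the Jacobi identity for the bracket of Corollary 3.5, after
expanding the inner brackets. -/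
theorem stmt_1 (k V : Type*) [Field k] [CharZero k] [CommRing V] [Algebra k V]
    (br : V →ₗ[k] V →ₗ[k] V)
    (anti : ∀ x y : V, br x y = - br y x)
    (jacobi : ∀ x y z : V, br x (br y z) + br y (br z x) + br z (br x y) = 0)
    (leibniz : ∀ x y z : V, br x (y * z) = br x y * z + y * br x z)
    (D : V →ₗ[k] V)
    (hD : ∀ x y : V, D (x * y) = D x * y + x * D y)
    (hDbr : ∀ x y : V, D (br x y) = br (D x) y + br x (D y))
    (a b c : V) (n m K : ℤ) :
    laurentBr (fun u w => br u w) (fun u => D u) a n (br b c) (m + K)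
      + laurentBr (fun u w => br u w) (fun u => D u) a n
          (m • (b * D c) - K • (c * D b)) (m + K - 1)
      + laurentBr (fun u w => br u w) (fun u => D u) b m (br c a) (K + n)
      + laurentBr (fun u w => br u w) (fun u => D u) b m
          (K • (c * D a) - n • (a * D c)) (K + n - 1)
      + laurentBr (fun u w => br u w) (fun u => D u) c K (br a b) (n + m)
      + laurentBr (fun u w => br u w) (fun u => D u) c K
          (n • (a * D b) - m • (b * D a)) (n + m - 1)
      = 0 := by
  have hA : br a (br b c) + br b (br c a) + br c (br a b) = 0 := jacobi a b c
  have hB1 : (n • (a * D (br b c)) - (m + K) • (br b c * D a))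
      + br a (m • (b * D c) - K • (c * D b))
      + (m • (b * D (br c a)) - (K + n) • (br c a * D b))
      + br b (K • (c * D a) - n • (a * D c))
      + (K • (c * D (br a b)) - (n + m) • (br a b * D c))
      + br c (n • (a * D b) - m • (b * D a)) = 0 := by
    simp only [map_sub, map_zsmul, leibniz, hDbr]
    rw [anti (D b) c, anti (D c) a, anti (D a) b, anti b a, anti c b, anti a c]
    simp only [zsmul_eq_mul]
    push_cast
    ring
  have hB2 : (n • (a * D (m • (b * D c) - K • (c * D b)))
        - (m + K - 1) • ((m • (b * D c) - K • (c * D b)) * D a))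
      + (m • (b * D (K • (c * D a) - n • (a * D c)))
        - (K + n - 1) • ((K • (c * D a) - n • (a * D c)) * D b))
      + (K • (c * D (n • (a * D b) - m • (b * D a)))
        - (n + m - 1) • ((n • (a * D b) - m • (b * D a)) * D c)) = 0 := by
    simp only [map_sub, map_zsmul, hD]
    simp only [zsmul_eq_mul]
    push_cast
    ring
  simp only [laurentBr]
  have e1 : n + (m + K) = n + m + K := by ring
  have e2 : n + (m + K - 1) = n + m + K - 1 := by ring
  have e3 : m + (K + n) = n + m + K := by ring
  have e4 : m + (K + n - 1) = n + m + K - 1 := by ring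
  have e5 : K + (n + m) = n + m + K := by ring
  have e6 : K + (n + m - 1) = n + m + K - 1 := by ring
  rw [e1, e2, e3, e4, e5, e6]
  have e7 : n + m + K - 1 - 1 = n + m + K - 2 := by ring
  rw [e7]
  have HA : (LaurentPolynomial.C (br a (br b c)) + LaurentPolynomial.C (br b (br c a))
      + LaurentPolynomial.C (br c (br a b)) : LaurentPolynomial V) = 0 := by
    rw [← map_add, ← map_add, hA, map_zero]
  have HB1 : (LaurentPolynomial.C (n • (a * D (br b c)) - (m + K) • (br b c * D a))
      + LaurentPolynomial.C (br a (m • (b * D c) - K • (c * D b)))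
      + LaurentPolynomial.C (m • (b * D (br c a)) - (K + n) • (br c a * D b))
      + LaurentPolynomial.C (br b (K • (c * D a) - n • (a * D c)))
      + LaurentPolynomial.C (K • (c * D (br a b)) - (n + m) • (br a b * D c))
      + LaurentPolynomial.C (br c (n • (a * D b) - m • (b * D a)))
      : LaurentPolynomial V) = 0 := by
    rw [← map_add, ← map_add, ← map_add, ← map_add, ← map_add, hB1, map_zero]
  have HB2 : (LaurentPolynomial.C (n • (a * D (m • (b * D c) - K • (c * D b)))
        - (m + K - 1) • ((m • (b * D c) - K • (c * D b)) * D a))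
      + LaurentPolynomial.C (m • (b * D (K • (c * D a) - n • (a * D c)))
        - (K + n - 1) • ((K • (c * D a) - n • (a * D c)) * D b))
      + LaurentPolynomial.C (K • (c * D (n • (a * D b) - m • (b * D a)))
        - (n + m - 1) • ((n • (a * D b) - m • (b * D a)) * D c))
      : LaurentPolynomial V) = 0 := by
    rw [← map_add, ← map_add, hB2, map_zero]
  linear_combination HA * T (n + m + K) + HB1 * T (n + m + K - 1)
    + HB2 * T (n + m + K - 2)
end

section
/- Let V be a Poisson algebra over a field k of characteristic 0 and D a Poisson derivation of V. Then for all a, b, c ∈ V and all n, m, k ∈ ℤ the following Leibniz rule holds in the Laurent polynomial ring V[t,t⁻¹]: B(a,n; b·c, m+k) = B(a,n;b,m)·(c·tᵏ) + (b·tᵐ)·B(a,n;c,k). (Together with the Jacobi identity this proves Corollary 3.5: the bracket [a·tⁿ, b·tᵐ] = B(a,n;b,m) is a Poisson bracket on V[t,t⁻¹].) -/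
open LaurentPolynomial

/-- the Leibniz rule
`B(a,n; b·c, m+k) = B(a,n;b,m)·(c·tᵏ) + (b·tᵐ)·B(a,n;c,k)` for the bracket of
Corollary 3.5. -/
theorem stmt_2 (k V : Type*) [Field k] [CharZero k] [CommRing V] [Algebra k V]
    (br : V →ₗ[k] V →ₗ[k] V)
    (anti : ∀ x y : V, br x y = - br y x)
    (jacobi : ∀ x y z : V, br x (br y z) + br y (br z x) + br z (br x y) = 0)
    (leibniz : ∀ x y z : V, br x (y * z) = br x y * z + y * br x z)
    (D : V →ₗ[k] V)
    (hD : ∀ x y : V, D (x * y) = D x * y + x * D y)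
    (hDbr : ∀ x y : V, D (br x y) = br (D x) y + br x (D y))
    (a b c : V) (n m K : ℤ) :
    laurentBr (fun u w => br u w) (fun u => D u) a n (b * c) (m + K)
      = laurentBr (fun u w => br u w) (fun u => D u) a n b m
          * (LaurentPolynomial.C c * T K)
        + (LaurentPolynomial.C b * T m)
          * laurentBr (fun u w => br u w) (fun u => D u) a n c K := by
  have key : ∀ (x : V) (e : ℤ) (y : V) (f : ℤ),
      (LaurentPolynomial.C x * T e) * (LaurentPolynomial.C y * T f)
        = LaurentPolynomial.C (x * y) * T (e + f) := by
    intro x e y f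
    rw [mul_mul_mul_comm, ← map_mul, ← T_add]
  have hb : br a (b * c) = br a b * c + b * br a c := leibniz a b c
  have hd : n • (a * D (b * c)) - (m + K) • (b * c * D a)
      = (n • (a * D b) - m • (b * D a)) * c + b * (n • (a * D c) - K • (c * D a)) := by
    rw [hD]; simp only [zsmul_eq_mul]; push_cast; ring
  simp only [laurentBr, hb, hd, map_add, add_mul, mul_add, key]
  rw [show n + m - 1 + K = n + m + K - 1 from by ring,
      show m + (n + K) = n + m + K from by ring,
      show m + (n + K - 1) = n + m + K - 1 from by ring]
  ring
end

section
/- Let V be a Poisson algebra over a field k of characteristic 0 and D a Poisson derivation of V. Then for all x, y, z ∈ V and all δ, λ, μ ∈ k the following identity holds in V: β(x,[y,z];δ,λ) + (δ+λ)·β(x, z·D(y); δ,λ) + μ·β(x, D(y·z); δ,λ) − β(y,[x,z];δ,μ) − (δ+μ)·β(y, z·D(x); δ,μ) − λ·β(y, D(x·z); δ,μ) = β([x,y], z; δ, λ+μ) − (λ+μ)·β(y·D(x), z; δ, λ+μ) + λ·β(D(x·y), z; δ, λ+μ). (This is the conformal Jacobi identity [x λ [y μ z]] − [y μ [x λ z]]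 = [[x λ y] λ+μ z] for the λ-bracket of Proposition 3.4, with the formal variable ∂ evaluated at δ.) -/
/-- The λ-bracket `β(x,y;δ,λ) = [x,y] + δ·(y·D(x)) + λ·D(x·y)` of Proposition 3.4,
with the formal variable `∂` evaluated at the scalar `δ`. -/
def confBr {k V : Type*} [Field k] [CommRing V] [Algebra k V]
    (br : V → V → V) (D : V → V) (x y : V) (δ lam : k) : V :=
  br x y + δ • (y * D x) + lam • D (x * y)

/-- the conformal Jacobi identity
`[x λ [y μ z]] − [y μ [x λ z]] = [[x λ y] λ+μ z]` for the λ-bracket of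
Proposition 3.4, with `∂` evaluated at `δ`. -/
theorem stmt_3 (k V : Type*) [Field k] [CharZero k] [CommRing V] [Algebra k V]
    (br : V →ₗ[k] V →ₗ[k] V)
    (anti : ∀ x y : V, br x y = - br y x)
    (jacobi : ∀ x y z : V, br x (br y z) + br y (br z x) + br z (br x y) = 0)
    (leibniz : ∀ x y z : V, br x (y * z) = br x y * z + y * br x z)
    (D : V →ₗ[k] V)
    (hD : ∀ x y : V, D (x * y) = D x * y + x * D y)
    (hDbr : ∀ x y : V, D (br x y) = br (D x) y + br x (D y))
    (x y z : V) (δ lam mu : k) :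
    confBr (fun u w => br u w) (fun u => D u) x (br y z) δ lam
      + (δ + lam) • confBr (fun u w => br u w) (fun u => D u) x (z * D y) δ lam
      + mu • confBr (fun u w => br u w) (fun u => D u) x (D (y * z)) δ lam
      - confBr (fun u w => br u w) (fun u => D u) y (br x z) δ mu
      - (δ + mu) • confBr (fun u w => br u w) (fun u => D u) y (z * D x) δ mu
      - lam • confBr (fun u w => br u w) (fun u => D u) y (D (x * z)) δ mu
      = confBr (fun u w => br u w) (fun u => D u) (br x y) z δ (lam + mu)
        - (lam + mu) • confBr (fun u w => br u w) (fun u => D u) (y * D x) z δ (lam + mu)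
        + lam • confBr (fun u w => br u w) (fun u => D u) (D (x * y)) z δ (lam + mu) := by
  have leib1 : ∀ a b c : V, br (a * b) c = a * br b c + br a c * b := by
    intro a b c
    rw [anti (a * b) c, leibniz c a b, anti c a, anti c b]
    ring
  have jac' : br (br x y) z = br x (br y z) - br y (br x z) := by
    have h := jacobi x y z
    rw [anti z x, anti z (br x y)] at h
    simp only [map_neg] at h
    linear_combination -h
  simp only [confBr]
  rw [jac']
  simp only [hD, hDbr, leibniz, leib1, map_add, LinearMap.add_apply, Algebra.smul_def]
  linear_combination (-(algebraMap k V lam * D z)) * anti y x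
    + (-((algebraMap k V δ + algebraMap k V lam + algebraMap k V mu) * z)) * anti (D x) y
end

section
/- Let R be a commutative ℚ-algebra and let ∂, λ, x ∈ R. Then for all integers n, m ≥ 1 the following exact identity holds in R: x·[ (xⁿ + (λ/2)·x^{n−1})·((x+λ)ᵐ − ((∂+λ)/2)·(x+λ)^{m−1}) − (xᵐ − ((λ+∂)/2)·x^{m−1})·((x−∂−λ)ⁿ + (λ/2)·(x−∂−λ)^{n−1}) ] = (x − ∂/2)·(xⁿ·(x+λ)ᵐ − xᵐ·(x−∂−λ)ⁿ) + ((λ² + ∂·λ)/4)·(xⁿ·(x+λ)^{m−1} − xᵐ·(x−∂−λ)^{n−1}). (This exact identity relates the (2,2)- and (1,1)-entries of the conformal bracket [aₙ λ aₘ] in Cend₂ and underlies the formula [aₙ λ aₘ] = (n∂+(m+n)λ)·a_{n+m−1} + ((λ²+∂λ)/4)·((m+n−2)λ+(n−1)∂)·b_{n+m−1} in the Poisson conformal algebra PK₁₀, Section 5 of the paper.) -/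
/-- the exact identity relating the (2,2)- and (1,1)-entries of the
conformal bracket `[aₙ λ aₘ]` in `Cend₂`, underlying the bracket formula in the
Poisson conformal algebra `PK₁₀`. -/
theorem stmt_9 (R : Type*) [CommRing R] [Algebra ℚ R] (d lam x : R)
    (n m : ℕ) (hn : 1 ≤ n) (hm : 1 ≤ m) :
    x * ((x ^ n + (1/2 : ℚ) • (lam * x ^ (n - 1)))
          * ((x + lam) ^ m - (1/2 : ℚ) • ((d + lam) * (x + lam) ^ (m - 1)))
        - (x ^ m - (1/2 : ℚ) • ((lam + d) * x ^ (m - 1)))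
          * ((x - d - lam) ^ n + (1/2 : ℚ) • (lam * (x - d - lam) ^ (n - 1))))
      = (x - (1/2 : ℚ) • d) * (x ^ n * (x + lam) ^ m - x ^ m * (x - d - lam) ^ n)
        + (1/4 : ℚ) • ((lam ^ 2 + d * lam)
            * (x ^ n * (x + lam) ^ (m - 1) - x ^ m * (x - d - lam) ^ (n - 1))) := by
  obtain ⟨k, rfl⟩ : ∃ k, n = k + 1 := ⟨n - 1, (Nat.succ_pred_eq_of_pos hn).symm⟩
  obtain ⟨l, rfl⟩ : ∃ l, m = l + 1 := ⟨m - 1, (Nat.succ_pred_eq_of_pos hm).symm⟩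
  simp only [Nat.add_sub_cancel, pow_succ, Algebra.smul_def]
  set e : R := algebraMap ℚ R (1/2) with he
  have h1 : e + e = 1 := by
    rw [he, ← map_add, ← map_one (algebraMap ℚ R)]; norm_num
  have h2 : algebraMap ℚ R (1/4) = e * e := by
    rw [he, ← map_mul]; norm_num
  set P : R := x ^ k
  set Q : R := x ^ l
  set A : R := (x + lam) ^ l
  set B : R := (x - d - lam) ^ k
  linear_combination
    (e * lam * (lam + d) * x * (Q * B - P * A)) * h1
      + (-((lam ^ 2 + d * lam) * (x * P * A - x * Q * B))) * h2
end

section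
/- Let R₀ = ℚ[∂,λ] be the polynomial ring in two variables and consider polynomials in a further variable x over R₀. For all integers n ≥ 1 and m ≥ 2, the polynomial Rₚ := (xⁿ + (λ/2)·x^{n−1})·(x+λ)^{m−2} − x^{m−2}·((x−∂−λ)ⁿ + (λ/2)·(x−∂−λ)^{n−1}) has degree at most n+m−3 in x (in particular its coefficient of x^{n+m−2} vanishes), and its coefficient of x^{n+m−3} equals n·∂ + (n+m−2)·λ. (This is the (2,2)-entry computation establishing the formula [aₙ λ bₘ] = ((n+m−2)λ + n∂)·b_{n+m−1} in the Poisson conformal algebra PK₁₀, Section 5 of the paper.) -/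
open Polynomial

lemma key_top {R : Type*} [CommRing R] (s t u : R) (a b : ℕ) :
    (((X ^ (a+1) + C s * X ^ a) * (X + C t) ^ b
      - X ^ b * ((X + C u) ^ (a+1) + C s * (X + C u) ^ a)) : R[X]).coeff (a+b+1) = 0 := by
  simp only [coeff_sub, add_mul, mul_add, coeff_add, mul_assoc, coeff_C_mul,
    coeff_X_pow_mul', coeff_X_add_C_pow]
  rw [if_pos (by omega), if_pos (by omega), if_pos (by omega), if_pos (by omega)]
  have h1 : a + b + 1 - (a + 1) = b := by omega
  have h2 : a + b + 1 - a = b + 1 := by omega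
  have h3 : a + b + 1 - b = a + 1 := by omega
  rw [h1, h2, h3]
  simp [Nat.choose_succ_self, Nat.sub_self]

lemma key_next {R : Type*} [CommRing R] (s t u : R) (a b : ℕ) :
    (((X ^ (a+1) + C s * X ^ a) * (X + C t) ^ b
      - X ^ b * ((X + C u) ^ (a+1) + C s * (X + C u) ^ a)) : R[X]).coeff (a+b)
    = b * t - (a+1) * u := by
  simp only [coeff_sub, add_mul, mul_add, coeff_add, mul_assoc, coeff_C_mul,
    coeff_X_pow_mul', coeff_X_add_C_pow]
  rcases b with _ | b
  · rw [if_neg (by omega), if_pos (by omega), if_pos (by omega), if_pos (by omega)]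
    have h2 : a + 0 - a = 0 := by omega
    have h3 : a + 0 - 0 = a := by omega
    simp only [h2, h3]
    simp [Nat.succ_sub_one]
    ring
  · rw [if_pos (by omega), if_pos (by omega), if_pos (by omega), if_pos (by omega)]
    have h1 : a + (b+1) - (a + 1) = b := by omega
    have h2 : a + (b+1) - a = b + 1 := by omega
    have h3 : a + (b+1) - (b+1) = a := by omega
    rw [h1, h2, h3]
    have h4 : (b+1) - b = 1 := by omega
    have h5 : (a+1) - a = 1 := by omega
    rw [h4, h5]
    simp [Nat.choose_succ_self_right]
    ring

lemma key_deg {R : Type*} [CommRing R] [Nontrivial R] (s t u : R) (a b : ℕ) :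
    (((X ^ (a+1) + C s * X ^ a) * (X + C t) ^ b
      - X ^ b * ((X + C u) ^ (a+1) + C s * (X + C u) ^ a)) : R[X]).natDegree ≤ a + b + 1 := by
  refine le_trans (natDegree_sub_le _ _) (max_le ?_ ?_)
  · refine le_trans natDegree_mul_le ?_
    have h1 : (X ^ (a+1) + C s * X ^ a : R[X]).natDegree ≤ a + 1 :=
      le_trans (natDegree_add_le _ _) (max_le (by simp)
        (le_trans natDegree_mul_le (by simp)))
    have h2 : ((X + C t) ^ b : R[X]).natDegree ≤ b :=
      le_trans (natDegree_pow_le) (by simp)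
    omega
  · refine le_trans natDegree_mul_le ?_
    have h1 : ((X + C u) ^ (a+1) + C s * (X + C u) ^ a : R[X]).natDegree ≤ a + 1 := by
      refine le_trans (natDegree_add_le _ _) (max_le ?_ ?_)
      · exact le_trans natDegree_pow_le (by simp)
      · refine le_trans natDegree_mul_le ?_
        have := natDegree_pow_le (p := (X + C u : R[X])) (n := a)
        simp only [natDegree_C, natDegree_X_add_C, mul_one] at this ⊢
        omega
    have h2 : (X ^ b : R[X]).natDegree ≤ b := by simp
    omega

/-- for
`Rₚ = (xⁿ + (λ/2)x^{n−1})(x+λ)^{m−2} − x^{m−2}((x−∂−λ)ⁿ + (λ/2)(x−∂−λ)^{n−1})`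
over `ℚ[∂,λ]`, the polynomial has degree at most `n+m−3` in `x` (in particular
the coefficient of `x^{n+m−2}` vanishes), and the coefficient of `x^{n+m−3}`
equals `n∂ + (n+m−2)λ`. Here `∂ = X 0`, `λ = X 1` in `MvPolynomial (Fin 2) ℚ`. -/
theorem stmt_11 (n m : ℕ) (hn : 1 ≤ n) (hm : 2 ≤ m)
    (Rp : Polynomial (MvPolynomial (Fin 2) ℚ))
    (hRp : Rp = (Polynomial.X ^ n
            + Polynomial.C ((1/2 : ℚ) • MvPolynomial.X 1) * Polynomial.X ^ (n - 1))
          * (Polynomial.X + Polynomial.C (MvPolynomial.X 1)) ^ (m - 2)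
        - Polynomial.X ^ (m - 2)
          * ((Polynomial.X - Polynomial.C (MvPolynomial.X 0)
                - Polynomial.C (MvPolynomial.X 1)) ^ n
            + Polynomial.C ((1/2 : ℚ) • MvPolynomial.X 1)
              * (Polynomial.X - Polynomial.C (MvPolynomial.X 0)
                  - Polynomial.C (MvPolynomial.X 1)) ^ (n - 1))) :
    Rp.natDegree ≤ n + m - 3 ∧ Rp.coeff (n + m - 2) = 0 ∧
      Rp.coeff (n + m - 3) = n • MvPolynomial.X 0 + (n + m - 2) • MvPolynomial.X 1 := by
  obtain ⟨a, rfl⟩ : ∃ a, n = a + 1 := ⟨n - 1, by omega⟩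
  obtain ⟨b, rfl⟩ : ∃ b, m = b + 2 := ⟨m - 2, by omega⟩
  set R := MvPolynomial (Fin 2) ℚ
  set s : R := (1/2 : ℚ) • MvPolynomial.X 1
  set t : R := MvPolynomial.X 1
  set u : R := -MvPolynomial.X 0 - MvPolynomial.X 1
  have hu : (Polynomial.X - Polynomial.C (MvPolynomial.X 0)
      - Polynomial.C (MvPolynomial.X 1) : R[X]) = Polynomial.X + Polynomial.C u := by
    simp only [u, map_sub, map_neg]; ring
  have e1 : a + 1 - 1 = a := by omega
  have e2 : b + 2 - 2 = b := by omega
  have e3 : a + 1 + (b + 2) - 2 = a + b + 1 := by omega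
  have e4 : a + 1 + (b + 2) - 3 = a + b := by omega
  rw [hu, e1, e2] at hRp
  rw [e3, e4, hRp]
  refine ⟨?_, key_top s t u a b, ?_⟩
  · have h := natDegree_le_pred (key_deg s t u a b) (key_top s t u a b)
    simpa using h
  · rw [key_next s t u a b]
    simp only [s, t, u, nsmul_eq_mul]
    push_cast
    ring
end
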